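/- arXiv:1205.2767 — 3 statements merged into one kernel-verified Lean document; each statement's English description precedes it below -/
import Mathlib

section
/- Let k be a commutative ring and A = ⊕_{p≥0} A_p a graded k-algebra with A_0 a k-algebra, generated as an A_0-algebra by finitely many homogeneous elements. Then there exists m > 0 such that the graded A_0-subalgebra ⊕_{p≥0} A_{pm} is generated as an A_0-algebra by A_m. -/
/-!
Let `ℓ` be a common multiple of the positive degrees of the generators. A monomial of degree
`D + ℓ` with `D ≥ #s * ℓ` is divisible by some `x ^ (ℓ / deg x)`, so `A_{D+ℓ} = A_ℓ A_D` for such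
`D`. Iterating, `A_{D+m} = A_m A_D` for `m = (#s + 1) * ℓ` and all `D ≥ m`, whence
`A_{pm} = (A_m)^p` for `p ≥ 1`.
-/

open Finset Submodule

theorem DirectSum.Decomposition.span_iUnion_inf_le_span {R M ι : Type*} [DecidableEq ι]
    [Semiring R] [AddCommMonoid M] [Module R M] (ℳ : ι → Submodule R M)
    [DirectSum.Decomposition ℳ] (T : ι → Set M) (hT : ∀ i, T i ⊆ ℳ i) (i : ι) :
    span R (⋃ j, T j) ⊓ ℳ i ≤ span R (T i) := by
  let π : M →ₗ[R] M := (ℳ i).subtype ∘ₗ DirectSum.component R ι (fun j ↦ ℳ j) i ∘ₗ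
    (DirectSum.decomposeLinearEquiv ℳ).toLinearMap
  have hπ {y : M} {j : ι} (hy : y ∈ ℳ j) : π y = if j = i then y else 0 := by
    split_ifs with h
    · subst h; exact DirectSum.decompose_of_mem_same ℳ hy
    · exact DirectSum.decompose_of_mem_ne ℳ hy h
  have hle : span R (⋃ j, T j) ≤ (span R (T i)).comap π := by
    refine span_le.2 (Set.iUnion_subset fun j y hy ↦ ?_)
    rw [SetLike.mem_coe, mem_comap, hπ (hT j hy)]
    split_ifs with h
    · subst h; exact subset_span hy
    · exact zero_mem _
  rintro x ⟨hx, hxi⟩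
  simpa [hπ hxi] using hle hx

section Iterate

variable {k A : Type*} [CommSemiring k] [Semiring A] [Algebra k A] (𝒜 : ℕ → Submodule k A)

theorem add_mul_le_mul_of_add_le_mul [SetLike.GradedMonoid 𝒜] {D₀ ℓ : ℕ}
    (h : ∀ D, D₀ ≤ D → 𝒜 (D + ℓ) ≤ 𝒜 ℓ * 𝒜 D) (N : ℕ) {D : ℕ} (hD : D₀ ≤ D) :
    𝒜 (D + N * ℓ) ≤ 𝒜 (N * ℓ) * 𝒜 D := by
  induction N with
  | zero =>
    intro x hx
    simpa using mul_mem_mul (SetLike.one_mem_graded 𝒜) hx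
  | succ N ih =>
    calc 𝒜 (D + (N + 1) * ℓ) = 𝒜 (D + N * ℓ + ℓ) := by rw [add_one_mul, add_assoc]
      _ ≤ 𝒜 ℓ * (𝒜 (N * ℓ) * 𝒜 D) := (h _ (hD.trans le_self_add)).trans (mul_le_mul' le_rfl ih)
      _ ≤ 𝒜 ((N + 1) * ℓ) * 𝒜 D := by
        rw [← mul_assoc, add_one_mul, add_comm _ ℓ]
        exact mul_le_mul' (mul_le.2 fun _ ha _ hb ↦ SetLike.mul_mem_graded ha hb) le_rfl

theorem mul_subset_adjoin_of_add_le_mul {D₀ m : ℕ} (hm : D₀ ≤ m)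
    (h : ∀ D, D₀ ≤ D → 𝒜 (D + m) ≤ 𝒜 m * 𝒜 D) (p : ℕ) :
    (𝒜 (p * m) : Set A) ⊆ Algebra.adjoin k ((𝒜 0 : Set A) ∪ (𝒜 m : Set A)) := by
  induction p with
  | zero => simpa using Set.subset_union_left.trans Algebra.subset_adjoin
  | succ p ih =>
    rcases p.eq_zero_or_pos with rfl | hp
    · simpa using Set.subset_union_right.trans Algebra.subset_adjoin
    · intro x hx
      rw [add_one_mul] at hx
      refine (mul_le (P := Subalgebra.toSubmodule (Algebra.adjoin k _)).2 fun a ha b hb ↦ ?_)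
        (h _ (hm.trans (Nat.le_mul_of_pos_left m hp)) hx)
      exact Subalgebra.mul_mem _ (Algebra.subset_adjoin (Or.inr ha)) (ih hb)

end Iterate

section Monomials

variable {k A : Type*} [CommSemiring k] [CommSemiring A] [Algebra k A] (𝒜 : ℕ → Submodule k A)
  (s : Finset A) (d : A → ℕ)

def monomialsOfDegree (D : ℕ) : Set A :=
  {w | ∃ a ∈ 𝒜 0, ∃ c : A → ℕ, ∑ x ∈ s, c x * d x = D ∧ a * ∏ x ∈ s, x ^ c x = w}

variable [SetLike.GradedMonoid 𝒜] {s d}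

theorem monomialsOfDegree_subset (hd : ∀ x ∈ s, x ∈ 𝒜 (d x)) (D : ℕ) :
    monomialsOfDegree 𝒜 s d D ⊆ 𝒜 D := by
  rintro _ ⟨a, ha, c, rfl, rfl⟩
  simpa using SetLike.mul_mem_graded ha (SetLike.prod_pow_mem_graded 𝒜 d id c hd)

variable (s d) in
theorem closure_subset_iUnion_monomialsOfDegree :
    (Submonoid.closure ((𝒜 0 : Set A) ∪ s) : Set A) ⊆ ⋃ D, monomialsOfDegree 𝒜 s d D := by
  classical
  intro w hw
  simp only [Set.mem_iUnion]
  induction hw using Submonoid.closure_induction with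
  | mem y hy =>
    rcases hy with hy | hy
    · exact ⟨0, y, hy, 0, by simp, by simp⟩
    · refine ⟨d y, 1, SetLike.one_mem_graded 𝒜, Pi.single y 1, ?_, ?_⟩
      · rw [sum_eq_single_of_mem y hy fun x _ hx ↦ by simp [hx]]; simp
      · rw [prod_eq_single_of_mem y hy fun x _ hx ↦ by simp [hx]]; simp
  | one => exact ⟨0, 1, SetLike.one_mem_graded 𝒜, 0, by simp, by simp⟩
  | mul _ _ _ _ h₁ h₂ =>
    obtain ⟨D₁, a₁, ha₁, c₁, rfl, rfl⟩ := h₁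
    obtain ⟨D₂, a₂, ha₂, c₂, rfl, rfl⟩ := h₂
    refine ⟨_, a₁ * a₂, SetLike.mul_mem_graded ha₁ ha₂, c₁ + c₂, rfl, ?_⟩
    simp only [Pi.add_apply, pow_add, prod_mul_distrib]
    ring

theorem monomialsOfDegree_add_subset_mul (hd : ∀ x ∈ s, x ∈ 𝒜 (d x)) {ℓ : ℕ} (hℓ : 0 < ℓ)
    (hdvd : ∀ x ∈ s, 0 < d x → d x ∣ ℓ) {D : ℕ} (hD : #s * ℓ ≤ D) :
    monomialsOfDegree 𝒜 s d (D + ℓ) ⊆ 𝒜 ℓ * 𝒜 D := by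
  classical
  rintro _ ⟨a, ha, c, hc, rfl⟩
  -- pigeonhole: a monomial of degree `> #s * (ℓ - 1)` has a factor `x ^ c x` of degree `≥ ℓ`
  obtain ⟨x, hx, hℓx⟩ : ∃ x ∈ s, ℓ ≤ c x * d x := by
    by_contra! h
    have hsum : ∑ x ∈ s, c x * d x ≤ #s * (ℓ - 1) := by
      simpa using sum_le_sum fun x hx ↦ Nat.le_sub_one_of_lt (h x hx)
    rw [Nat.mul_sub_one] at hsum
    omega
  have hdx : 0 < d x := Nat.pos_of_ne_zero fun h ↦ by simp [h] at hℓx; omega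
  obtain ⟨e, he⟩ := hdvd x hx hdx
  have hec : e ≤ c x := le_of_mul_le_mul_left (by rw [← he, mul_comm]; exact hℓx) hdx
  have hsplit : a * ∏ y ∈ s, y ^ c y =
      x ^ e * (a * (x ^ (c x - e) * ∏ y ∈ s.erase x, y ^ c y)) := by
    rw [← mul_prod_erase s _ hx, ← pow_mul_pow_sub x hec]; ring
  rw [hsplit]
  refine mul_mem_mul ?_ ?_
  · simpa [he, mul_comm] using SetLike.pow_mem_graded e (hd x hx)
  · have hdeg : 0 + ((c x - e) • d x + ∑ y ∈ s.erase x, c y • d y) = D := by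
      rw [← add_sum_erase s _ hx] at hc
      simp only [smul_eq_mul, zero_add, Nat.sub_mul]
      rw [mul_comm e, ← he]
      omega
    rw [← hdeg]
    exact SetLike.mul_mem_graded ha (SetLike.mul_mem_graded (SetLike.pow_mem_graded _ (hd x hx))
      (SetLike.prod_pow_mem_graded 𝒜 d id c fun y hy ↦ hd y (mem_of_mem_erase hy)))

end Monomials

section Generation

variable {k A : Type*} [CommSemiring k] [CommSemiring A] [Algebra k A] (𝒜 : ℕ → Submodule k A)
  [GradedAlgebra 𝒜] {s : Finset A} {d : A → ℕ}

theorem le_span_monomialsOfDegree (hd : ∀ x ∈ s, x ∈ 𝒜 (d x))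
    (hgen : Algebra.adjoin k ((𝒜 0 : Set A) ∪ (s : Set A)) = ⊤) (D : ℕ) :
    𝒜 D ≤ span k (monomialsOfDegree 𝒜 s d D) := by
  intro x hx
  have hspan : x ∈ span k (⋃ D, monomialsOfDegree 𝒜 s d D) := by
    refine span_mono (closure_subset_iUnion_monomialsOfDegree 𝒜 s d) ?_
    rw [← Algebra.adjoin_eq_span, hgen]
    trivial
  exact DirectSum.Decomposition.span_iUnion_inf_le_span 𝒜 _ (monomialsOfDegree_subset 𝒜 hd) D
    ⟨hspan, hx⟩

theorem add_le_mul_of_card_mul_le (hd : ∀ x ∈ s, x ∈ 𝒜 (d x))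
    (hgen : Algebra.adjoin k ((𝒜 0 : Set A) ∪ (s : Set A)) = ⊤) {ℓ : ℕ} (hℓ : 0 < ℓ)
    (hdvd : ∀ x ∈ s, 0 < d x → d x ∣ ℓ) {D : ℕ} (hD : #s * ℓ ≤ D) :
    𝒜 (D + ℓ) ≤ 𝒜 ℓ * 𝒜 D :=
  (le_span_monomialsOfDegree 𝒜 hd hgen _).trans
    (span_le.2 (monomialsOfDegree_add_subset_mul 𝒜 hd hℓ hdvd hD))

end Generation

/-- If a graded `k`-algebra `A = ⊕ A_p` is generated over `A_0` by finitely many homogeneous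
elements, then for some `m > 0` the subalgebra `⊕_p A_{pm}` is generated over `A_0` by `A_m`. -/
theorem exists_veronese_generated_in_degree_one {k A : Type*} [CommRing k] [CommRing A]
    [Algebra k A] (𝒜 : ℕ → Submodule k A) [GradedAlgebra 𝒜]
    (s : Finset A) (hs : ∀ x ∈ s, ∃ d : ℕ, x ∈ 𝒜 d)
    (hgen : Algebra.adjoin k ((𝒜 0 : Set A) ∪ (s : Set A)) = ⊤) :
    ∃ m : ℕ, 0 < m ∧ ∀ p : ℕ,
      (𝒜 (p * m) : Set A) ⊆ Algebra.adjoin k ((𝒜 0 : Set A) ∪ (𝒜 m : Set A)) := by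
  choose! d hd using hs
  obtain ⟨ℓ, hℓ, hdvd⟩ : ∃ ℓ, 0 < ℓ ∧ ∀ x ∈ s, 0 < d x → d x ∣ ℓ :=
    ⟨∏ x ∈ s, max (d x) 1, prod_pos fun _ _ ↦ by omega, fun x hx hdx ↦ by
      simpa [max_eq_left (show 1 ≤ d x from hdx)] using dvd_prod_of_mem (fun y ↦ max (d y) 1) hx⟩
  have hstep (N : ℕ) {D : ℕ} (hD : #s * ℓ ≤ D) : 𝒜 (D + N * ℓ) ≤ 𝒜 (N * ℓ) * 𝒜 D :=
    add_mul_le_mul_of_add_le_mul 𝒜 (fun _ ↦ add_le_mul_of_card_mul_le 𝒜 hd hgen hℓ hdvd) N hD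
  exact ⟨(#s + 1) * ℓ, by positivity,
    mul_subset_adjoin_of_add_le_mul 𝒜 (Nat.mul_le_mul_right ℓ (Nat.le_succ _)) fun _ ↦ hstep _⟩
end

section
/- Let x_1,...,x_n be homogeneous generators of a graded A_0-algebra A of positive degrees d_1,...,d_n, let D = d_1⋯d_n and m = 2nD. If a monomial X = x_1^{a_1}⋯x_n^{a_n} has degree pm with p ≥ 2, then there exist non-negative integers b_1,...,b_n with b_j·(D/d_j) ≤ a_j for all j and b_1 + ⋯ + b_n = 2n. -/
/-! Put `q_j = D / d_j`, so that `q_j d_j = D`, and `c_j = ⌊a_j / q_j⌋`. From `a_j < (c_j + 1) q_j`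
we get `p m = Σ a_j d_j ≤ (Σ c_j + n) D`, and `p ≥ 2`, `m = 2nD` force `Σ c_j ≥ 3n ≥ 2n`.
Any `b ≤ c` with `Σ b_j = 2n` then satisfies `b_j q_j ≤ c_j q_j ≤ a_j`. -/

open Finset

theorem Fintype.exists_le_sum_eq_of_le_sum {ι : Type*} [Fintype ι] (c : ι → ℕ) :
    ∀ k ≤ ∑ i, c i, ∃ b ≤ c, ∑ i, b i = k := by
  classical
  intro k hk
  induction k with
  | zero => exact ⟨0, fun _ => Nat.zero_le _, by simp⟩
  | succ k ih =>
    obtain ⟨b, hbc, hb⟩ := ih (by omega)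
    obtain ⟨i, -, hi⟩ : ∃ i ∈ univ, b i < c i := exists_lt_of_sum_lt (by omega)
    refine ⟨Function.update b i (b i + 1), fun j => ?_, ?_⟩
    · rcases eq_or_ne j i with rfl | hji
      · simpa using hi
      · simpa [hji] using hbc j
    · rw [sum_update_of_mem (mem_univ i), ← hb, sum_eq_add_sum_sdiff_singleton_of_mem (mem_univ i)]
      ring

theorem Nat.mul_le_div_add_one_mul {a q : ℕ} (hq : 0 < q) (d : ℕ) :
    a * d ≤ (a / q + 1) * (q * d) := by
  rw [← mul_assoc]
  exact Nat.mul_le_mul_right d (by simpa [add_mul] using (Nat.lt_div_mul_add (a := a) hq).le)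

theorem sum_mul_le_sum_div_add_card_mul {ι : Type*} [Fintype ι] (a d : ι → ℕ) {D : ℕ}
    (hD : 0 < D) (hdvd : ∀ i, d i ∣ D) :
    ∑ i, a i * d i ≤ (∑ i, a i / (D / d i) + Fintype.card ι) * D := by
  have hq : ∀ i, 0 < D / d i := fun i =>
    Nat.div_pos (Nat.le_of_dvd hD (hdvd i)) (Nat.pos_of_dvd_of_pos (hdvd i) hD)
  calc ∑ i, a i * d i ≤ ∑ i, (a i / (D / d i) + 1) * (D / d i * d i) :=
        sum_le_sum fun i _ => Nat.mul_le_div_add_one_mul (hq i) (d i)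
    _ = (∑ i, a i / (D / d i) + Fintype.card ι) * D := by
        simp only [Nat.div_mul_cancel (hdvd _), ← sum_mul, sum_add_distrib, sum_const,
          card_univ, smul_eq_mul, mul_one]

theorem exists_exponent_vector_general {n : ℕ} (d a : Fin n → ℕ)
    (D m p : ℕ) (hD : D = ∏ j, d j) (hm : m = 2 * n * D) (hp : 2 ≤ p)
    (hsum : ∑ j, a j * d j = p * m) :
    ∃ b : Fin n → ℕ, (∀ j, b j * (D / d j) ≤ a j) ∧ ∑ j, b j = 2 * n := by
  rcases Nat.eq_zero_or_pos D with rfl | hDpos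
  · exact ⟨fun _ => 2, by simp, by simp [mul_comm]⟩
  have hdvd : ∀ j, d j ∣ D := fun j => hD ▸ dvd_prod_of_mem d (mem_univ j)
  set c : Fin n → ℕ := fun j => a j / (D / d j)
  have hc : 2 * n ≤ ∑ j, c j := by
    have h : 4 * n * D ≤ (∑ j, c j + n) * D := calc
      4 * n * D ≤ p * m := by rw [hm]; nlinarith
      _ = ∑ j, a j * d j := hsum.symm
      _ ≤ (∑ j, c j + n) * D := by
        simpa using sum_mul_le_sum_div_add_card_mul a d hDpos hdvd
    have := Nat.le_of_mul_le_mul_right h hDpos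
    omega
  obtain ⟨b, hbc, hb⟩ := Fintype.exists_le_sum_eq_of_le_sum c (2 * n) hc
  exact ⟨b, fun j => (Nat.mul_le_mul_right _ (hbc j)).trans (Nat.div_mul_le_self _ _), hb⟩

/-- If `d_1,…,d_n ≥ 1`, `D = d_1⋯d_n`, `m = 2nD` and `Σ a_j d_j = p·m` with `p ≥ 2`, then
there exist `b_1,…,b_n ≥ 0` with `b_j·(D/d_j) ≤ a_j` and `Σ b_j = 2n`. -/
theorem exists_exponent_vector {n : ℕ} (d a : Fin n → ℕ) (hd : ∀ j, 1 ≤ d j)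
    (D m p : ℕ) (hD : D = ∏ j, d j) (hm : m = 2 * n * D) (hp : 2 ≤ p)
    (hsum : ∑ j, a j * d j = p * m) :
    ∃ b : Fin n → ℕ, (∀ j, b j * (D / d j) ≤ a j) ∧ ∑ j, b j = 2 * n :=
  exists_exponent_vector_general d a D m p hD hm hp hsum
end

section
/- Let k be a field, A a finitely generated associative k-algebra, I ⊂ A a left ideal of codimension n, and M = A/I with v the image of 1. Then the Zariski tangent space of the moduli of codimension-n left ideals at the point [I] is identified with Hom_A(I, A/I): left ideals J ⊂ A[ε] := k[ε]/(ε²)⊗A with A[ε]/J free of rank n over k[ε]/(ε²) and J mod ε = I correspond bijectively to A-module homomorphisms γ : I → A/I, via J = the left ideal generated by the elements a − ε γ̃(a), a ∈ I, where γ̃ is a lift of γ. -/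
open TrivSqZeroExt

/-- The canonical `k`-algebra map `k[ε] → A[ε]`. -/
noncomputable def dualNumberMap (k A : Type*) [CommRing k] [Ring A] [Algebra k A] :
    DualNumber k →ₐ[k] DualNumber A :=
  DualNumber.lift ⟨(Algebra.ofId k (DualNumber A), DualNumber.eps),
    DualNumber.eps_mul_eps, fun a => ((Algebra.commutes a DualNumber.eps).symm : _)⟩

noncomputable instance dualNumberModule (k A : Type*) [CommRing k] [Ring A] [Algebra k A] :
    Module (DualNumber k) (DualNumber A) :=
  Module.compHom _ (dualNumberMap k A).toRingHom

instance dualNumberTower (k A : Type*) [CommRing k] [Ring A] [Algebra k A] :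
    IsScalarTower (DualNumber k) (DualNumber A) (DualNumber A) :=
  ⟨fun c x y => mul_assoc ((dualNumberMap k A).toRingHom c) x y⟩

namespace TangentAux

variable {k A : Type*} [Field k] [Ring A] [Algebra k A]

lemma Asmul_eq (r : A) (x : DualNumber A) : r • x = inl r * x := by
  ext
  · simp
  · simp [op_smul_eq_mul]

instance : IsScalarTower A (DualNumber A) (DualNumber A) :=
  ⟨fun r x y => by
    simp only [smul_eq_mul, Asmul_eq, mul_assoc]⟩

lemma eps_mul (x : DualNumber A) : (DualNumber.eps : DualNumber A) * x = inr x.fst := by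
  ext
  · rw [fst_mul, DualNumber.fst_eps, zero_mul, fst_inr]
  · rw [snd_mul, DualNumber.fst_eps, zero_smul, zero_add, DualNumber.snd_eps,
      op_smul_eq_mul, one_mul, snd_inr]

lemma dsmul_eq (r : DualNumber k) (x : DualNumber A) :
    r • x = dualNumberMap k A r * x := rfl

lemma dmap_fst (r : DualNumber k) : (dualNumberMap k A r).fst = algebraMap k A r.fst := by
  rw [dualNumberMap, DualNumber.lift_apply_apply]
  show ((Algebra.ofId k (DualNumber A)) r.fst + (Algebra.ofId k (DualNumber A)) r.snd * DualNumber.eps).fst = _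
  rw [fst_add, fst_mul, DualNumber.fst_eps, mul_zero, add_zero, Algebra.ofId_apply,
    algebraMap_eq_inl', fst_inl]

lemma dmap_snd (r : DualNumber k) : (dualNumberMap k A r).snd = algebraMap k A r.snd := by
  rw [dualNumberMap, DualNumber.lift_apply_apply]
  show ((Algebra.ofId k (DualNumber A)) r.fst + (Algebra.ofId k (DualNumber A)) r.snd * DualNumber.eps).snd = _
  simp only [snd_add, snd_mul, DualNumber.fst_eps, DualNumber.snd_eps, Algebra.ofId_apply,
    algebraMap_eq_inl', snd_inl, fst_inl, MulOpposite.op_zero, zero_smul, add_zero, zero_add,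
    smul_eq_mul, mul_one]

lemma dsmul_fst (r : DualNumber k) (x : DualNumber A) :
    (r • x).fst = algebraMap k A r.fst * x.fst := by
  rw [dsmul_eq, fst_mul, dmap_fst]

lemma dsmul_snd (r : DualNumber k) (x : DualNumber A) :
    (r • x).snd = algebraMap k A r.fst * x.snd + algebraMap k A r.snd * x.fst := by
  rw [dsmul_eq, snd_mul, dmap_fst, dmap_snd, op_smul_eq_mul, smul_eq_mul]


variable (I : Submodule A A) (J : Submodule (DualNumber A) (DualNumber A))

/-- The ideal `K = {d | εd ∈ J}`. -/
def Ksub : Submodule A A :=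
  (J.restrictScalars A).comap (inrHom A A)

lemma mem_Ksub {d : A} : d ∈ Ksub J ↔ (inr d : DualNumber A) ∈ J := Iff.rfl

lemma inr_fst_mem {x : DualNumber A} (hx : x ∈ J) : (inr x.fst : DualNumber A) ∈ J := by
  have := J.smul_mem (DualNumber.eps : DualNumber A) hx
  rwa [smul_eq_mul, eps_mul] at this

variable {I J} in
lemma exists_snd (hfst : TrivSqZeroExt.fst '' (J : Set (DualNumber A)) = (I : Set A))
    {a : A} (ha : a ∈ I) : ∃ c, (inl a + inr c : DualNumber A) ∈ J := by
  have ha' : a ∈ TrivSqZeroExt.fst '' (J : Set (DualNumber A)) := hfst ▸ ha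
  obtain ⟨x, hx, rfl⟩ := ha'
  exact ⟨x.snd, by rwa [inl_fst_add_inr_snd_eq]⟩

variable {I J} in
lemma I_le_Ksub (hfst : TrivSqZeroExt.fst '' (J : Set (DualNumber A)) = (I : Set A)) :
    I ≤ Ksub J := by
  intro a ha
  obtain ⟨c, hc⟩ := exists_snd hfst ha
  have h2 := inr_fst_mem J hc
  rw [mem_Ksub]
  simpa using h2


lemma ksmul_eq (r : k) (x : DualNumber A) : (inl r : DualNumber k) • x = r • x := by
  rw [dsmul_eq]
  ext
  · rw [fst_mul, dmap_fst, fst_inl, fst_smul, Algebra.smul_def]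
  · rw [snd_mul, dmap_fst, dmap_snd, fst_inl, snd_inl, map_zero, smul_zero, add_zero,
      snd_smul, Algebra.smul_def, smul_eq_mul]

lemma epsk_smul (x : DualNumber A) :
    (DualNumber.eps : DualNumber k) • x = inr x.fst := by
  ext
  · rw [dsmul_fst, DualNumber.fst_eps, map_zero, zero_mul, fst_inr]
  · rw [dsmul_snd, DualNumber.fst_eps, DualNumber.snd_eps, map_zero, map_one, zero_mul,
      one_mul, zero_add, snd_inr]

lemma inr_ksmul (r : k) (d : A) : (inr (r • d) : DualNumber A) = r • inr d := by
  ext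
  · rw [fst_inr, fst_smul, fst_inr, smul_zero]
  · rw [snd_inr, snd_smul, snd_inr]

variable {J} {n : ℕ}

section dimension

variable {I}
variable (B : Module.Basis (Fin n) (DualNumber k) (DualNumber A ⧸ J))

/-- The `k`-linear map `A → kⁿ` sending `d` to the coordinates of `[εd]` w.r.t. `B`. -/
noncomputable def Gmap : A →ₗ[k] (Fin n → k) where
  toFun d := fun i => (B.equivFun (Submodule.Quotient.mk (inr d)) i).snd
  map_add' d e := by
    funext i
    show snd (B.equivFun (Submodule.Quotient.mk (inr (d + e))) i) = _
    rw [inr_add, Submodule.Quotient.mk_add, map_add]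
    rfl
  map_smul' r d := by
    funext i
    show snd (B.equivFun (Submodule.Quotient.mk (inr (r • d))) i)
      = r • snd (B.equivFun (Submodule.Quotient.mk (inr d)) i)
    rw [inr_ksmul, ← ksmul_eq, Submodule.Quotient.mk_smul, map_smul]
    simp only [Pi.smul_apply, smul_eq_mul, snd_mul, fst_inl, snd_inl,
      MulOpposite.op_zero, zero_smul, add_zero, smul_eq_mul, smul_zero]

lemma Gmap_eq_zero_iff (d : A) : Gmap B d = 0 ↔ (inr d : DualNumber A) ∈ J := by
  have hmk : (Submodule.Quotient.mk (inr d) : DualNumber A ⧸ J)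
      = (DualNumber.eps : DualNumber k) • (Submodule.Quotient.mk (inl d) : DualNumber A ⧸ J) := by
    rw [← Submodule.Quotient.mk_smul, epsk_smul, fst_inl]
  constructor
  · intro h
    have hfst0 : ∀ i, (B.equivFun (Submodule.Quotient.mk (inr d)) i).fst = 0 := by
      intro i
      rw [hmk, map_smul]
      simp only [Pi.smul_apply, smul_eq_mul, fst_mul, DualNumber.fst_eps, zero_mul]
    have : B.equivFun (Submodule.Quotient.mk (inr d)) = 0 := by
      funext i
      have hsnd := congrFun h i
      exact TrivSqZeroExt.ext (hfst0 i) hsnd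
    have h0 : (Submodule.Quotient.mk (inr d) : DualNumber A ⧸ J) = 0 := by
      have := congrArg B.equivFun.symm this
      rwa [LinearEquiv.symm_apply_apply, map_zero] at this
    exact (Submodule.Quotient.mk_eq_zero J).mp h0
  · intro h
    have h0 : (Submodule.Quotient.mk (inr d) : DualNumber A ⧸ J) = 0 :=
      (Submodule.Quotient.mk_eq_zero J).mpr h
    funext i
    rw [Gmap]
    simp only [LinearMap.coe_mk, AddHom.coe_mk, h0, map_zero, Pi.zero_apply, snd_zero]

lemma Gmap_surjective : Function.Surjective (Gmap B) := by
  intro x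
  obtain ⟨w, hw⟩ := Submodule.Quotient.mk_surjective J (B.equivFun.symm (fun i => inl (x i)))
  refine ⟨w.fst, ?_⟩
  have hmk : (Submodule.Quotient.mk (inr w.fst) : DualNumber A ⧸ J)
      = (DualNumber.eps : DualNumber k) • (Submodule.Quotient.mk w : DualNumber A ⧸ J) := by
    rw [← Submodule.Quotient.mk_smul, epsk_smul]
  funext i
  rw [Gmap]
  simp only [LinearMap.coe_mk, AddHom.coe_mk, hmk, hw, map_smul, LinearEquiv.apply_symm_apply]
  simp only [Pi.smul_apply, smul_eq_mul, snd_mul, DualNumber.fst_eps, fst_inl, snd_inl,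
    DualNumber.snd_eps, zero_smul, op_smul_eq_mul, one_mul, zero_add, zero_mul, Pi.zero_apply]

lemma Ksub_le (B : Module.Basis (Fin n) (DualNumber k) (DualNumber A ⧸ J))
    (bI : Module.Basis (Fin n) k (A ⧸ I))
    (hfst : TrivSqZeroExt.fst '' (J : Set (DualNumber A)) = (I : Set A)) :
    Ksub J ≤ I := by
  classical
  -- quotient by K is isomorphic to kⁿ
  have hker : LinearMap.ker (Gmap B) = (Ksub J).restrictScalars k := by
    ext d
    rw [LinearMap.mem_ker, Gmap_eq_zero_iff, Submodule.restrictScalars_mem, mem_Ksub]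
  let eK : (A ⧸ (Ksub J).restrictScalars k) ≃ₗ[k] (Fin n → k) :=
    (Submodule.quotEquivOfEq _ _ hker.symm).trans
      ((Gmap B).quotKerEquivOfSurjective (Gmap_surjective B))
  -- quotient by I has a basis of cardinality n
  let bI' : Module.Basis (Fin n) k (A ⧸ I.restrictScalars k) :=
    bI.map (Submodule.Quotient.restrictScalarsEquiv k I).symm
  have : FiniteDimensional k (A ⧸ I.restrictScalars k) := Module.Finite.of_basis bI'
  have : FiniteDimensional k (A ⧸ (Ksub J).restrictScalars k) :=
    LinearEquiv.finiteDimensional eK.symm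
  have hrankI : Module.finrank k (A ⧸ I.restrictScalars k) = n := by
    rw [Module.finrank_eq_card_basis bI', Fintype.card_fin]
  have hrankK : Module.finrank k (A ⧸ (Ksub J).restrictScalars k) = n := by
    rw [eK.finrank_eq, Module.finrank_fin_fun]
  have hle : I.restrictScalars k ≤ ((Ksub J).restrictScalars k).comap LinearMap.id := by
    intro a ha
    exact I_le_Ksub hfst ha
  let g : (A ⧸ I.restrictScalars k) →ₗ[k] (A ⧸ (Ksub J).restrictScalars k) :=
    Submodule.mapQ _ _ LinearMap.id hle
  have hgsurj : Function.Surjective g := by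
    intro y
    obtain ⟨d, rfl⟩ := Submodule.Quotient.mk_surjective _ y
    exact ⟨Submodule.Quotient.mk d, by rw [Submodule.mapQ_apply, LinearMap.id_apply]⟩
  have hginj : Function.Injective g :=
    (LinearMap.injective_iff_surjective_of_finrank_eq_finrank
      (by rw [hrankI, hrankK])).mpr hgsurj
  intro d hd
  have hgd : g (Submodule.Quotient.mk d) = 0 := by
    rw [Submodule.mapQ_apply, LinearMap.id_apply, Submodule.Quotient.mk_eq_zero]
    exact hd
  have : (Submodule.Quotient.mk d : A ⧸ I.restrictScalars k) = 0 := by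
    apply hginj
    rw [hgd, map_zero]
  rwa [Submodule.Quotient.mk_eq_zero, Submodule.restrictScalars_mem] at this

end dimension


section gammaDef

variable {I}
variable (hfst : TrivSqZeroExt.fst '' (J : Set (DualNumber A)) = (I : Set A))

/-- The underlying function of the homomorphism `γ_J : I → A/I`. -/
noncomputable def gammaFun (x : I) : A ⧸ I :=
  -(Submodule.Quotient.mk (exists_snd hfst x.2).choose)

lemma inr_sub' (c c' : A) : (inr (c - c') : DualNumber A) = inr c - inr c' := by
  ext
  · rw [fst_inr, fst_sub, fst_inr, fst_inr, sub_zero]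
  · rw [snd_inr, snd_sub, snd_inr, snd_inr]

lemma mem_iff_gammaFun (hK : Ksub J ≤ I) (a : A) (ha : a ∈ I) (c : A) :
    (inl a + inr c : DualNumber A) ∈ J ↔
      Submodule.Quotient.mk c = -(gammaFun hfst ⟨a, ha⟩) := by
  set c' := (exists_snd hfst (Subtype.mk a ha).2).choose with hc'def
  have hc' : (inl a + inr c' : DualNumber A) ∈ J :=
    (exists_snd hfst (Subtype.mk a ha).2).choose_spec
  have hrhs : (-(gammaFun hfst ⟨a, ha⟩) : A ⧸ I) = Submodule.Quotient.mk c' := by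
    rw [gammaFun, neg_neg]
  rw [hrhs]
  constructor
  · intro h
    have hmem : (inr (c - c') : DualNumber A) ∈ J := by
      have := J.sub_mem h hc'
      rwa [add_sub_add_left_eq_sub, ← inr_sub'] at this
    have : c - c' ∈ I := hK hmem
    exact (Submodule.Quotient.eq I).mpr this
  · intro h
    have hsub : c - c' ∈ I := (Submodule.Quotient.eq I).mp h
    have hmem : (inr (c - c') : DualNumber A) ∈ J := I_le_Ksub hfst hsub
    have h2 := J.add_mem hc' hmem
    have heq : inl a + inr c' + inr (c - c') = (inl a + inr c : DualNumber A) := by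
      rw [inr_sub']; abel
    rwa [heq] at h2

/-- `γ_J` as an `A`-linear map. -/
noncomputable def gammaOfJ (hK : Ksub J ≤ I) : I →ₗ[A] A ⧸ I where
  toFun := gammaFun hfst
  map_add' x y := by
    show gammaFun hfst (x + y) = gammaFun hfst x + gammaFun hfst y
    obtain ⟨cx, hcx⟩ := exists_snd hfst x.2
    obtain ⟨cy, hcy⟩ := exists_snd hfst y.2
    have hx : Submodule.Quotient.mk cx = -(gammaFun hfst x) :=
      (mem_iff_gammaFun hfst hK x.1 x.2 cx).mp hcx
    have hy : Submodule.Quotient.mk cy = -(gammaFun hfst y) :=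
      (mem_iff_gammaFun hfst hK y.1 y.2 cy).mp hcy
    have hxy : (inl ((x + y : I) : A) + inr (cx + cy) : DualNumber A) ∈ J := by
      have h3 := J.add_mem hcx hcy
      have heq : (inl (x.1) + inr cx) + (inl (y.1) + inr cy)
          = inl (x.1 + y.1) + inr (cx + cy) := by rw [inl_add, inr_add]; abel
      rwa [heq] at h3
    have h := (mem_iff_gammaFun hfst hK _ (x + y).2 (cx + cy)).mp hxy
    refine neg_inj.mp ?_
    rw [← h, Submodule.Quotient.mk_add, hx, hy, neg_add]
  map_smul' r x := by
    show gammaFun hfst (r • x) = r • gammaFun hfst x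
    obtain ⟨cx, hcx⟩ := exists_snd hfst x.2
    have hx : Submodule.Quotient.mk cx = -(gammaFun hfst x) :=
      (mem_iff_gammaFun hfst hK x.1 x.2 cx).mp hcx
    have hrx : (inl ((r • x : I) : A) + inr (r * cx) : DualNumber A) ∈ J := by
      have h3 := J.smul_mem (inl r : DualNumber A) hcx
      rw [smul_eq_mul, mul_add, inl_mul_inl, inl_mul_inr, smul_eq_mul] at h3
      exact h3
    have h := (mem_iff_gammaFun hfst hK _ (r • x).2 (r * cx)).mp hrx
    refine neg_inj.mp ?_
    have hmk : (Submodule.Quotient.mk (r * cx) : A ⧸ I) = r • Submodule.Quotient.mk cx := by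
      rw [← Submodule.Quotient.mk_smul, smul_eq_mul]
    rw [← h, hmk, hx, smul_neg]

lemma gammaOfJ_spec (hK : Ksub J ≤ I) (a : A) (ha : a ∈ I) (c : A) :
    (inl a + inr c : DualNumber A) ∈ J ↔
      Submodule.Quotient.mk c = -(gammaOfJ hfst hK ⟨a, ha⟩) :=
  mem_iff_gammaFun hfst hK a ha c

end gammaDef


lemma fst_pair (a c : A) : (inl a + inr c : DualNumber A).fst = a := by
  rw [fst_add, fst_inl, fst_inr, add_zero]

lemma snd_pair (a c : A) : (inl a + inr c : DualNumber A).snd = c := by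
  rw [snd_add, snd_inl, snd_inr, zero_add]

section JofSec

variable {I} (γ : I →ₗ[A] A ⧸ I)

/-- The deformation of `I` attached to `γ : I → A/I`. -/
noncomputable def Jof : Submodule (DualNumber A) (DualNumber A) where
  carrier := {x | ∃ y : I, x.fst = y.1 ∧ Submodule.Quotient.mk x.snd = -γ y}
  add_mem' := by
    rintro x x' ⟨y, hf, hs⟩ ⟨y', hf', hs'⟩
    refine ⟨y + y', ?_, ?_⟩
    · rw [fst_add, hf, hf']; rfl
    · rw [snd_add, Submodule.Quotient.mk_add, hs, hs', map_add, neg_add]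
  zero_mem' :=
    ⟨0, by rw [fst_zero]; rfl,
      by rw [snd_zero, Submodule.Quotient.mk_zero, map_zero, neg_zero]⟩
  smul_mem' := by
    rintro r x ⟨y, hf, hs⟩
    refine ⟨r.fst • y, ?_, ?_⟩
    · rw [smul_eq_mul, fst_mul, hf, SetLike.val_smul, smul_eq_mul]
    · rw [smul_eq_mul, snd_mul, op_smul_eq_mul, smul_eq_mul, Submodule.Quotient.mk_add]
      have h2 : (Submodule.Quotient.mk (r.snd * x.fst) : A ⧸ I) = 0 := by
        rw [Submodule.Quotient.mk_eq_zero, hf]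
        exact I.smul_mem r.snd y.2
      have h1 : (Submodule.Quotient.mk (r.fst * x.snd) : A ⧸ I)
          = r.fst • Submodule.Quotient.mk x.snd := by
        rw [← Submodule.Quotient.mk_smul, smul_eq_mul]
      rw [h1, h2, add_zero, hs, smul_neg, ← map_smul]

lemma mem_Jof (a c : A) :
    (inl a + inr c : DualNumber A) ∈ Jof γ ↔
      ∃ ha : a ∈ I, Submodule.Quotient.mk c = -γ ⟨a, ha⟩ := by
  constructor
  · rintro ⟨y, hf, hs⟩
    rw [fst_pair] at hf
    rw [snd_pair] at hs
    refine ⟨hf ▸ y.2, ?_⟩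
    have hy : (⟨a, hf ▸ y.2⟩ : I) = y := Subtype.ext hf
    rw [hy]
    exact hs
  · rintro ⟨ha, hc⟩
    exact ⟨⟨a, ha⟩, by rw [fst_pair], by rw [snd_pair]; exact hc⟩

lemma fst_image_Jof :
    TrivSqZeroExt.fst '' ((Jof γ : Submodule (DualNumber A) (DualNumber A)) : Set (DualNumber A))
      = (I : Set A) := by
  ext a
  constructor
  · rintro ⟨x, ⟨y, hf, _⟩, rfl⟩
    rw [hf]; exact y.2
  · intro ha
    obtain ⟨c, hc⟩ := Submodule.Quotient.mk_surjective I (-γ ⟨a, ha⟩)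
    exact ⟨inl a + inr c, (mem_Jof γ a c).mpr ⟨ha, hc⟩, fst_pair a c⟩

lemma mem_Jof' (x : DualNumber A) :
    x ∈ Jof γ ↔ ∃ y : I, x.fst = y.1 ∧ Submodule.Quotient.mk x.snd = -γ y := Iff.rfl

set_option maxHeartbeats 1000000 in
lemma Jof_basis (bI : Module.Basis (Fin n) k (A ⧸ I)) :
    Nonempty (Module.Basis (Fin n) (DualNumber k) (DualNumber A ⧸ Jof γ)) := by
  classical
  letI instDk : Module (DualNumber k) (DualNumber k) := Semiring.toModule
  letI instPi : Module (DualNumber k) (Fin n → DualNumber k) :=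
    Pi.Function.module (Fin n) (DualNumber k) (DualNumber k)
  -- a `k`-linear section of the projection `A → A/I`
  let mkk : A →ₗ[k] (A ⧸ I) := LinearMap.restrictScalars k I.mkQ
  have hmkk : ∀ a : A, mkk a = Submodule.Quotient.mk a := fun a => rfl
  have hsurj : LinearMap.range mkk = ⊤ := by
    rw [LinearMap.range_eq_top]
    intro y
    obtain ⟨a, rfl⟩ := Submodule.Quotient.mk_surjective I y
    exact ⟨a, rfl⟩
  obtain ⟨sec, hsec⟩ := mkk.exists_rightInverse_of_surjective hsurj
  have hsec' : ∀ v, mkk (sec v) = v := by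
    intro v
    have := LinearMap.ext_iff.mp hsec v
    simpa using this
  have hmemI : ∀ a : A, a - sec (mkk a) ∈ I := by
    intro a
    have h0 : mkk (a - sec (mkk a)) = 0 := by rw [map_sub, hsec', sub_self]
    rw [hmkk, Submodule.Quotient.mk_eq_zero] at h0
    exact h0
  -- the extension of `γ` to a `k`-linear map `A → A/I`
  set Γ : A → A ⧸ I := fun a => γ ⟨a - sec (mkk a), hmemI a⟩ with hΓ
  have Γadd : ∀ a b : A, Γ (a + b) = Γ a + Γ b := by
    intro a b
    rw [hΓ, ← map_add]
    show γ ⟨(a + b) - sec (mkk (a + b)), hmemI _⟩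
      = γ (⟨a - sec (mkk a), hmemI a⟩ + ⟨b - sec (mkk b), hmemI b⟩)
    congr 1
    apply Subtype.ext
    show (a + b) - sec (mkk (a + b)) = (a - sec (mkk a)) + (b - sec (mkk b))
    rw [map_add, map_add]
    abel
  have Γsmul : ∀ (t : k) (a : A), Γ (algebraMap k A t * a) = t • Γ a := by
    intro t a
    have h1 : algebraMap k A t * a = t • a := (Algebra.smul_def t a).symm
    have harg : (⟨t • a - sec (mkk (t • a)), hmemI _⟩ : I)
        = t • (⟨a - sec (mkk a), hmemI a⟩ : I) := by
      apply Subtype.ext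
      show t • a - sec (mkk (t • a)) = t • (a - sec (mkk a))
      rw [map_smul, map_smul, smul_sub]
    rw [hΓ, h1]
    show γ ⟨t • a - sec (mkk (t • a)), hmemI _⟩ = t • γ ⟨a - sec (mkk a), hmemI a⟩
    rw [harg, ← algebraMap_smul A t, map_smul, algebraMap_smul]
  have ΓonI : ∀ (a : A) (ha : a ∈ I), Γ a = γ ⟨a, ha⟩ := by
    intro a ha
    have h0 : mkk a = 0 := by rw [hmkk, Submodule.Quotient.mk_eq_zero]; exact ha
    have harg : (⟨a - sec (mkk a), hmemI a⟩ : I) = ⟨a, ha⟩ := by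
      apply Subtype.ext
      show a - sec (mkk a) = a
      rw [h0, map_zero, sub_zero]
    rw [hΓ]
    show γ ⟨a - sec (mkk a), hmemI a⟩ = γ ⟨a, ha⟩
    rw [harg]
  have habs : ∀ (t : k) (a : A), mkk (algebraMap k A t * a) = t • mkk a := by
    intro t a
    rw [← Algebra.smul_def, map_smul]
  -- the `k[ε]`-linear map `A[ε] → k[ε]ⁿ` with kernel `Jof γ`
  let Φ : DualNumber A →ₗ[DualNumber k] (Fin n → DualNumber k) :=
    { toFun := fun x i => inl (bI.equivFun (mkk x.fst) i)
        + inr (bI.equivFun (mkk x.snd + Γ x.fst) i)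
      map_add' := by
        intro x y
        funext i
        simp only [Pi.add_apply]
        apply TrivSqZeroExt.ext
        · simp only [fst_add, fst_inl, fst_inr, add_zero, zero_add, map_add, Pi.add_apply]
        · simp only [snd_add, fst_add, snd_inl, snd_inr, add_zero, zero_add, map_add, Γadd,
            Pi.add_apply]
          abel
      map_smul' := by
        intro r x
        funext i
        have key : (inl (bI.equivFun (mkk (r • x).fst) i)
              + inr (bI.equivFun (mkk (r • x).snd + Γ (r • x).fst) i) : DualNumber k)
            = r * (inl (bI.equivFun (mkk x.fst) i)
              + inr (bI.equivFun (mkk x.snd + Γ x.fst) i)) := by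
          apply TrivSqZeroExt.ext
          · simp only [fst_mul, fst_add, fst_inl, fst_inr, add_zero, dsmul_fst, habs,
              map_smul, Pi.smul_apply, smul_eq_mul]
          · simp only [snd_mul, fst_add, snd_add, fst_inl, fst_inr, snd_inl, snd_inr,
              add_zero, zero_add, op_smul_eq_mul, smul_eq_mul, dsmul_snd, dsmul_fst,
              map_add, map_smul, habs, Γsmul, Pi.add_apply, Pi.smul_apply]
            ring
        exact key }
  have hΦ : ∀ (x : DualNumber A) (i : Fin n), Φ x i
      = inl (bI.equivFun (mkk x.fst) i) + inr (bI.equivFun (mkk x.snd + Γ x.fst) i) :=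
    fun x i => rfl
  have hΦsurj : Function.Surjective Φ := by
    intro yv
    set v : A ⧸ I := bI.equivFun.symm (fun i => (yv i).fst) with hv
    obtain ⟨c, hc⟩ := Submodule.Quotient.mk_surjective I
      (bI.equivFun.symm (fun i => (yv i).snd))
    refine ⟨inl (sec v) + inr c, ?_⟩
    funext i
    rw [hΦ, fst_pair, snd_pair, hsec']
    have hΓ0 : Γ (sec v) = 0 := by
      have harg : (⟨sec v - sec (mkk (sec v)), hmemI _⟩ : I) = 0 := by
        apply Subtype.ext
        show sec v - sec (mkk (sec v)) = 0
        rw [hsec', sub_self]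
      show γ ⟨sec v - sec (mkk (sec v)), hmemI _⟩ = 0
      rw [harg, map_zero]
    rw [hΓ0, add_zero, hmkk, hc, hv, LinearEquiv.apply_symm_apply,
      LinearEquiv.apply_symm_apply]
    exact inl_fst_add_inr_snd_eq (yv i)
  have hker : LinearMap.ker Φ = (Jof γ).restrictScalars (DualNumber k) := by
    ext x
    rw [LinearMap.mem_ker, Submodule.restrictScalars_mem, mem_Jof']
    constructor
    · intro h
      have hcomp : ∀ i, Φ x i = 0 := fun i => congrFun h i
      have hfst0 : ∀ i, bI.equivFun (mkk x.fst) i = 0 := by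
        intro i
        have := congrArg TrivSqZeroExt.fst (hcomp i)
        rwa [hΦ, fst_pair, fst_zero] at this
      have hsnd0 : ∀ i, bI.equivFun (mkk x.snd + Γ x.fst) i = 0 := by
        intro i
        have := congrArg TrivSqZeroExt.snd (hcomp i)
        rwa [hΦ, snd_pair, snd_zero] at this
      have h1 : mkk x.fst = 0 := by
        rw [← (LinearEquiv.map_eq_zero_iff bI.equivFun)]
        funext i
        exact hfst0 i
      have h2 : mkk x.snd + Γ x.fst = 0 := by
        rw [← (LinearEquiv.map_eq_zero_iff bI.equivFun)]
        funext i
        exact hsnd0 i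
      have hfI : x.fst ∈ I := by
        rw [hmkk, Submodule.Quotient.mk_eq_zero] at h1
        exact h1
      refine ⟨⟨x.fst, hfI⟩, rfl, ?_⟩
      have := ΓonI x.fst hfI
      rw [this] at h2
      have h3 : (Submodule.Quotient.mk x.snd : A ⧸ I) = mkk x.snd := rfl
      rw [h3]
      have h4 := congrArg (fun z => z - γ ⟨x.fst, hfI⟩) h2
      simpa using h4
    · rintro ⟨y, hf, hs⟩
      funext i
      rw [hΦ]
      have h1 : mkk x.fst = 0 := by
        rw [hmkk, Submodule.Quotient.mk_eq_zero, hf]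
        exact y.2
      have h2 : mkk x.snd + Γ x.fst = 0 := by
        have hΓy : Γ x.fst = γ y := by
          have := ΓonI x.fst (by rw [hf]; exact y.2)
          rw [this]
          congr 1
          exact Subtype.ext hf
        have h3 : mkk x.snd = Submodule.Quotient.mk x.snd := rfl
        rw [hΓy, h3, hs, neg_add_cancel]
      rw [h1, h2, map_zero]
      show inl ((0 : Fin n → k) i) + inr ((0 : Fin n → k) i) = 0
      rw [Pi.zero_apply, inl_zero, inr_zero, add_zero]
  -- assemble the basis
  let e1 := Φ.quotKerEquivOfSurjective hΦsurj
  let e2 := Submodule.quotEquivOfEq _ _ hker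
  let e3 := Submodule.Quotient.restrictScalarsEquiv (DualNumber k) (Jof γ)
  exact ⟨(Pi.basisFun (DualNumber k) (Fin n)).map (e1.symm ≪≫ₗ e2 ≪≫ₗ e3)⟩

end JofSec

end TangentAux

open TangentAux

/-- First-order deformations of a codimension-`n` left ideal `I ⊆ A` — left ideals
`J ⊆ A[ε]` with `A[ε]/J` free of rank `n` over `k[ε]` and `J mod ε = I` — correspond
bijectively to `A`-module homomorphisms `γ : I → A/I`, via
`J = {a + εc : a ∈ I, c ≡ -γ(a) mod I}`, i.e. `J` is generated by the `a − ε γ̃(a)`. -/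
theorem tangent_space_deformations_equiv_hom {k A : Type*} [Field k] [Ring A] [Algebra k A]
    (hfg : Algebra.FiniteType k A) (n : ℕ) (I : Submodule A A)
    (hI : Nonempty (Module.Basis (Fin n) k (A ⧸ I))) :
    ∃ e : {J : Submodule (DualNumber A) (DualNumber A) //
        Nonempty (Module.Basis (Fin n) (DualNumber k) (DualNumber A ⧸ J)) ∧
        TrivSqZeroExt.fst '' (J : Set (DualNumber A)) = (I : Set A)} ≃ (↥I →ₗ[A] A ⧸ I),
      ∀ (J : {J : Submodule (DualNumber A) (DualNumber A) //
          Nonempty (Module.Basis (Fin n) (DualNumber k) (DualNumber A ⧸ J)) ∧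
          TrivSqZeroExt.fst '' (J : Set (DualNumber A)) = (I : Set A)})
        (a : A) (ha : a ∈ I) (c : A),
        (TrivSqZeroExt.inl a + TrivSqZeroExt.inr c ∈ J.1 ↔
          Submodule.Quotient.mk c = - (e J) ⟨a, ha⟩) := by
  classical
  obtain ⟨bI⟩ := hI
  have hK : ∀ (J : {J : Submodule (DualNumber A) (DualNumber A) //
      Nonempty (Module.Basis (Fin n) (DualNumber k) (DualNumber A ⧸ J)) ∧
      TrivSqZeroExt.fst '' (J : Set (DualNumber A)) = (I : Set A)}),
      Ksub J.1 ≤ I := fun J => Ksub_le (Classical.choice J.2.1) bI J.2.2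
  refine ⟨{ toFun := fun J => gammaOfJ J.2.2 (hK J)
            invFun := fun γ => ⟨Jof γ, Jof_basis γ bI, fst_image_Jof γ⟩
            left_inv := ?_
            right_inv := ?_ }, ?_⟩
  · intro J
    apply Subtype.ext
    show Jof (gammaOfJ J.2.2 (hK J)) = J.1
    apply le_antisymm
    · intro x hx
      rw [← inl_fst_add_inr_snd_eq x] at hx ⊢
      obtain ⟨ha, h⟩ := (mem_Jof _ _ _).mp hx
      exact (gammaOfJ_spec J.2.2 (hK J) _ ha _).mpr h
    · intro x hx
      have haI : x.fst ∈ I := by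
        have : x.fst ∈ TrivSqZeroExt.fst '' (J.1 : Set (DualNumber A)) := ⟨x, hx, rfl⟩
        rw [J.2.2] at this
        exact this
      rw [← inl_fst_add_inr_snd_eq x] at hx ⊢
      have h := (gammaOfJ_spec J.2.2 (hK J) _ haI _).mp hx
      exact (mem_Jof _ _ _).mpr ⟨haI, h⟩
  · intro γ
    apply LinearMap.ext
    intro x
    obtain ⟨c, hc⟩ := Submodule.Quotient.mk_surjective I (-γ x)
    have h1 : (TrivSqZeroExt.inl x.1 + TrivSqZeroExt.inr c : DualNumber A) ∈ Jof γ :=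
      (mem_Jof γ x.1 c).mpr ⟨x.2, hc⟩
    have h2 := (gammaOfJ_spec (fst_image_Jof γ)
      (hK ⟨Jof γ, Jof_basis γ bI, fst_image_Jof γ⟩) x.1 x.2 c).mp h1
    rw [hc] at h2
    exact neg_inj.mp h2.symm
  · intro J a ha c
    exact gammaOfJ_spec J.2.2 (hK J) a ha c
end
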